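/- arXiv:1905.09327 — 3 statements merged into one kernel-verified Lean document; each statement's English description precedes it below -/
import Mathlib

section
/- Let D ⊆ ℕ be infinite, n₀ ∈ D, and let f, g : D → ℝ satisfy f(n) ≥ g(n) for all n ∈ D with n ≥ n₀, and g(n)/n → ∞ as n → ∞ along D. Then H̃_f is infinite, and for every real A there exists a > A such that the function x ↦ f(x) − a·x attains its minimum on D. -/
/-!
Since `g` grows superlinearly along `D` and `f ≥ g` eventually, every tilted function
`x ↦ f x - a x` tends to `+∞` along `D` and so attains its minimum on `D`. If only finitely many
points `m ≤ M` were such minimizers, pick `x ∈ D` beyond `M`: a minimizer `m` for the slope `a`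
satisfies `a ≤ a (x - m) ≤ f x - f m`, and the right side is bounded independently of `a` because
`m` ranges over a finite set, so a large slope gives a contradiction.
-/

/-- `H̃_f`: points of `D ⊆ ℕ` at which `f(x) − a·x` attains its minimum on `D` for some `a`. -/
def Htilde (D : Set ℕ) (f : ℕ → ℝ) : Set ℕ :=
  {m | m ∈ D ∧ ∃ a : ℝ, ∀ x ∈ D, f m - a * m ≤ f x - a * x}

open Filter

theorem Filter.Tendsto.exists_isMinOn_of_cofinite_inf_principal {α β : Type*} [LinearOrder β]
    {s : Set α} (hs : s.Nonempty) {φ : α → β} (hφ : Tendsto φ (cofinite ⊓ 𝓟 s) atTop) :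
    ∃ m ∈ s, IsMinOn φ s m := by
  have : Nonempty s := hs.to_subtype
  have hval : Tendsto ((↑) : s → α) cofinite (cofinite ⊓ 𝓟 s) :=
    tendsto_inf.2 ⟨Subtype.val_injective.tendsto_cofinite,
      tendsto_principal.2 (Eventually.of_forall Subtype.prop)⟩
  obtain ⟨m, hm⟩ := (hφ.comp hval).exists_forall_le
  exact ⟨m, m.prop, isMinOn_iff.2 fun x hx => hm ⟨x, hx⟩⟩

theorem tendsto_sub_mul_atTop_of_tendsto_div {l : Filter ℕ} (hl : l ≤ atTop) {g : ℕ → ℝ}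
    (hg : Tendsto (fun n : ℕ => g n / n) l atTop) (a : ℝ) :
    Tendsto (fun n : ℕ => g n - a * n) l atTop := by
  have hprod : Tendsto (fun n : ℕ => (n : ℝ) * (g n / n - a)) l atTop :=
    (tendsto_natCast_atTop_atTop.mono_left hl).atTop_mul_atTop₀
      (tendsto_atTop_add_const_right l (-a) hg)
  refine hprod.congr' (((eventually_ne_atTop 0).filter_mono hl).mono fun n hn => ?_)
  have : (n : ℝ) ≠ 0 := Nat.cast_ne_zero.2 hn
  field_simp

theorem exists_isMinOn_sub_mul_of_superlinear {D : Set ℕ} {n₀ : ℕ} (hn₀ : n₀ ∈ D)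
    {f g : ℕ → ℝ} (hfg : ∀ n ∈ D, n₀ ≤ n → g n ≤ f n)
    (hg : Tendsto (fun n : ℕ => g n / n) (atTop ⊓ 𝓟 D) atTop) (a : ℝ) :
    ∃ m ∈ D, IsMinOn (fun x : ℕ => f x - a * x) D m := by
  have hg_le_f : ∀ᶠ n in atTop ⊓ 𝓟 D, g n - a * n ≤ f n - a * n := by
    filter_upwards [(eventually_ge_atTop n₀).filter_mono inf_le_left,
      mem_inf_of_right (mem_principal_self D)] with n hn hnD
    linarith [hfg n hnD hn]
  have hf := tendsto_atTop_mono' _ hg_le_f (tendsto_sub_mul_atTop_of_tendsto_div inf_le_left hg a)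
  rw [← Nat.cofinite_eq_atTop] at hf
  exact hf.exists_isMinOn_of_cofinite_inf_principal ⟨n₀, hn₀⟩

theorem le_sub_of_isMinOn_sub_mul {D : Set ℕ} {f : ℕ → ℝ} {a : ℝ} (ha : 0 ≤ a) {m x : ℕ}
    (hm : IsMinOn (fun x : ℕ => f x - a * x) D m) (hx : x ∈ D) (hmx : m < x) :
    a ≤ f x - f m := by
  have hmin : f m - a * m ≤ f x - a * x := isMinOn_iff.1 hm x hx
  have hgap : (m : ℝ) + 1 ≤ x := by exact_mod_cast hmx
  nlinarith

theorem Htilde_infinite_of_forall_exists_isMinOn {D : Set ℕ} (hD : D.Infinite) {f : ℕ → ℝ}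
    (hmin : ∀ a : ℝ, ∃ m ∈ D, IsMinOn (fun x : ℕ => f x - a * x) D m) :
    (Htilde D f).Infinite := by
  intro hfin
  obtain ⟨M, hM⟩ := hfin.bddAbove
  obtain ⟨b, hb⟩ := (hfin.image f).bddBelow
  obtain ⟨x, hxD, hMx⟩ := hD.exists_gt M
  set a := max 0 (f x - b + 1)
  obtain ⟨m, hmD, hm⟩ := hmin a
  have hmH : m ∈ Htilde D f := ⟨hmD, a, isMinOn_iff.1 hm⟩
  have hbm : b ≤ f m := hb ⟨m, hmH, rfl⟩
  have hax : a ≤ f x - f m :=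
    le_sub_of_isMinOn_sub_mul (le_max_left _ _) hm hxD ((hM hmH).trans_lt hMx)
  linarith [le_max_right 0 (f x - b + 1)]

/-- If `f ≥ g` on `D` from `n₀` on and `g(n)/n → ∞` along `D`, then `H̃_f` is infinite
and minimizing slopes can be taken arbitrarily large. -/
theorem Htilde_infinite_of_superlinear (D : Set ℕ) (hD : D.Infinite)
    (n₀ : ℕ) (hn₀ : n₀ ∈ D) (f g : ℕ → ℝ)
    (hfg : ∀ n ∈ D, n₀ ≤ n → g n ≤ f n)
    (hg : Filter.Tendsto (fun n : ℕ => g n / n)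
      (Filter.atTop ⊓ Filter.principal D) Filter.atTop) :
    (Htilde D f).Infinite ∧
      ∀ A : ℝ, ∃ a : ℝ, A < a ∧ ∃ m ∈ D, ∀ x ∈ D, f m - a * m ≤ f x - a * x := by
  have hmin := exists_isMinOn_sub_mul_of_superlinear hn₀ hfg hg
  refine ⟨Htilde_infinite_of_forall_exists_isMinOn hD hmin, fun A => ?_⟩
  obtain ⟨m, hmD, hm⟩ := hmin (A + 1)
  exact ⟨A + 1, lt_add_one A, m, hmD, isMinOn_iff.1 hm⟩
end

section
/- Let D ⊆ ℕ and let g₁, g₂ : D → ℝ satisfy g₂(n) ≥ g₁(n) for all n ∈ D, g₁(n) → ∞ and g₂(n)/n → 0 as n → ∞ along D. Suppose f : D → ℝ and n₀ ∈ D are such that f(n) ≥ g₁(n) for all n ∈ D with n ≥ n₀, and that there are infinitely many n ∈ D with f(n) ≤ g₂(n). Then H̃_f is a nonempty finite set; moreover, for every a ≤ 0 the function x ↦ f(x) − a·x attains its minimum on D, while for every a > 0 one has inf{f(x) − a·x : x ∈ D} = −∞. -/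
/-- Lemma 2 of the paper: under the stated growth conditions `H̃_f` is a nonempty finite set;
for every `a ≤ 0` the function `f(x) − a·x` attains its minimum on `D`, and for `a > 0`
its infimum on `D` is `−∞`. -/
theorem Htilde_finite (D : Set ℕ) (g₁ g₂ : ℕ → ℝ)
    (hgg : ∀ n ∈ D, g₁ n ≤ g₂ n)
    (hg₁ : Filter.Tendsto g₁ (Filter.atTop ⊓ Filter.principal D) Filter.atTop)
    (hg₂ : Filter.Tendsto (fun n : ℕ => g₂ n / n)
      (Filter.atTop ⊓ Filter.principal D) (nhds 0))
    (f : ℕ → ℝ) (n₀ : ℕ) (hn₀ : n₀ ∈ D)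
    (hf : ∀ n ∈ D, n₀ ≤ n → g₁ n ≤ f n)
    (hinf : {n | n ∈ D ∧ f n ≤ g₂ n}.Infinite) :
    ((Htilde D f).Nonempty ∧ (Htilde D f).Finite) ∧
      (∀ a : ℝ, a ≤ 0 → ∃ m ∈ D, ∀ x ∈ D, f m - a * m ≤ f x - a * x) ∧
      (∀ a : ℝ, 0 < a → ∀ b : ℝ, ∃ x ∈ D, f x - a * x < b) := by
  classical
  -- minimum attained for a ≤ 0
  have hmin : ∀ a : ℝ, a ≤ 0 → ∃ m ∈ D, ∀ x ∈ D, f m - a * m ≤ f x - a * x := by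
    intro a ha
    obtain ⟨N, hN⟩ : ∃ N, ∀ x ≥ N, x ∈ D → f n₀ - a * n₀ ≤ g₁ x := by
      have h := hg₁.eventually (Filter.eventually_ge_atTop (f n₀ - a * n₀))
      rw [Filter.eventually_inf_principal, Filter.eventually_atTop] at h
      exact h
    set N' := max N n₀ with hN'
    set T : Finset ℕ := (Finset.Iic N').filter (· ∈ D) with hT
    have hn₀T : n₀ ∈ T := by simp only [hT, Finset.mem_filter, Finset.mem_Iic]; exact ⟨le_max_right _ _, hn₀⟩
    obtain ⟨m, hmT, hm⟩ := T.exists_min_image (fun x => f x - a * x) ⟨n₀, hn₀T⟩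
    have hmD : m ∈ D := by
      have := hmT
      simp [hT] at this
      exact this.2
    refine ⟨m, hmD, ?_⟩
    intro x hx
    by_cases hxN : x ≤ N'
    · exact hm x (by simp [hT, hx, hxN])
    · push_neg at hxN
      have h1 : f m - a * m ≤ f n₀ - a * n₀ := hm n₀ hn₀T
      have h2 : f n₀ - a * n₀ ≤ g₁ x :=
        hN x (le_of_lt (lt_of_le_of_lt (le_max_left _ _) hxN)) hx
      have h3 : g₁ x ≤ f x := hf x hx (le_of_lt (lt_of_le_of_lt (le_max_right _ _) hxN))
      have h4 : a * x ≤ 0 := mul_nonpos_of_nonpos_of_nonneg ha (Nat.cast_nonneg x)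
      linarith
  -- infimum −∞ for a > 0
  have hunb : ∀ a : ℝ, 0 < a → ∀ b : ℝ, ∃ x ∈ D, f x - a * x < b := by
    intro a ha b
    obtain ⟨N, hN⟩ : ∃ N, ∀ x ≥ N, x ∈ D → g₂ x / x < a / 2 := by
      have h := hg₂.eventually (eventually_lt_nhds (show (0:ℝ) < a / 2 by linarith))
      rw [Filter.eventually_inf_principal, Filter.eventually_atTop] at h
      exact h
    obtain ⟨K, hK⟩ := exists_nat_gt ((-b) / (a / 2))
    obtain ⟨x, hxmem, hxgt⟩ := hinf.exists_gt (max N K)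
    obtain ⟨hxD, hxf⟩ := hxmem
    have hxN : N ≤ x := le_of_lt (lt_of_le_of_lt (le_max_left _ _) hxgt)
    have hxK : (K : ℝ) < x := by exact_mod_cast lt_of_le_of_lt (le_max_right _ _) hxgt
    have hxpos : (0 : ℝ) < x := by
      have : 0 ≤ (K : ℝ) := Nat.cast_nonneg K
      linarith
    have hdiv : g₂ x / x < a / 2 := hN x hxN hxD
    have hg2x : g₂ x < (a / 2) * x := by
      rwa [div_lt_iff₀ hxpos] at hdiv
    have hb : -b < (a / 2) * x := by
      have h1 : -b < (a / 2) * K := by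
        rwa [div_lt_iff₀ (by linarith : (0:ℝ) < a / 2), mul_comm] at hK
      have h2 : (a / 2) * K ≤ (a / 2) * x :=
        mul_le_mul_of_nonneg_left (le_of_lt hxK) (by linarith)
      linarith
    exact ⟨x, hxD, by nlinarith⟩
  refine ⟨⟨?_, ?_⟩, hmin, hunb⟩
  · obtain ⟨m, hmD, hm⟩ := hmin 0 le_rfl
    exact ⟨m, hmD, 0, hm⟩
  · obtain ⟨N, hN⟩ : ∃ N, ∀ x ≥ N, x ∈ D → f n₀ < g₁ x := by
      have h := hg₁.eventually (Filter.eventually_gt_atTop (f n₀))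
      rw [Filter.eventually_inf_principal, Filter.eventually_atTop] at h
      exact h
    apply Set.Finite.subset (Set.finite_Iio (max N n₀))
    rintro m ⟨hmD, a, hma⟩
    have ha : a ≤ 0 := by
      by_contra h
      push_neg at h
      obtain ⟨x, hxD, hx⟩ := hunb a h (f m - a * m)
      exact absurd (hma x hxD) (not_le.2 hx)
    by_contra hmge
    simp only [Set.mem_Iio, not_lt] at hmge
    have hm1 : n₀ ≤ m := le_trans (le_max_right _ _) hmge
    have h1 : f m - a * m ≤ f n₀ - a * n₀ := hma n₀ hn₀
    have h2 : f n₀ < g₁ m := hN m (le_trans (le_max_left _ _) hmge) hmD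
    have h3 : g₁ m ≤ f m := hf m hmD hm1
    have h4 : a * m ≤ a * n₀ :=
      mul_le_mul_of_nonpos_left (Nat.cast_le.2 hm1) ha
    linarith
end

section
/- Let D ⊆ ℕ and let g₁, g₂ : D → ℝ satisfy g₂(n) ≥ g₁(n) for all n ∈ D, g₂(n) → −∞ and g₁(n)/n → 0 as n → ∞ along D. Suppose f : D → ℝ and n₀ ∈ D are such that f(n) ≥ g₁(n) for all n ∈ D with n ≥ n₀, and that there are infinitely many n ∈ D with f(n) ≤ g₂(n). Then H̃_f is infinite; moreover, for every a < 0 the function x ↦ f(x) − a·x attains its minimum on D, while for every a ≥ 0 one has inf{f(x) − a·x : x ∈ D} = −∞. -/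
open Filter Topology

theorem tendsto_sub_mul_atTop_of_div_tendsto_zero {l : Filter ℕ} (hl : l ≤ atTop) {g f : ℕ → ℝ}
    (hg : Tendsto (fun n : ℕ => g n / n) l (𝓝 0)) (hgf : g ≤ᶠ[l] f) {a : ℝ} (ha : a < 0) :
    Tendsto (fun n : ℕ => f n - a * n) l atTop := by
  have key : Tendsto (fun n : ℕ => (n : ℝ) * (g n / n - a)) l atTop :=
    Tendsto.atTop_mul_pos (neg_pos.2 ha) (tendsto_natCast_atTop_atTop.mono_left hl)
      (by simpa using hg.sub_const a)
  refine tendsto_atTop_mono' l ?_ key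
  filter_upwards [hgf, hl (eventually_ne_atTop 0)] with n hn hn0
  have hn0' : (n : ℝ) ≠ 0 := Nat.cast_ne_zero.2 hn0
  calc (n : ℝ) * (g n / n - a) = g n - a * n := by field_simp
    _ ≤ f n - a * n := by linarith

theorem exists_forall_le_of_tendsto_atTop {β : Type*} [LinearOrder β] {D : Set ℕ}
    (hD : D.Nonempty) {φ : ℕ → β} (hφ : Tendsto φ (atTop ⊓ 𝓟 D) atTop) :
    ∃ m ∈ D, ∀ x ∈ D, φ m ≤ φ x := by
  have : Nonempty D := hD.to_subtype
  have hval : Tendsto ((↑) : D → ℕ) cofinite (atTop ⊓ 𝓟 D) :=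
    tendsto_inf.2 ⟨Nat.cofinite_eq_atTop ▸ Subtype.val_injective.tendsto_cofinite,
      tendsto_principal.2 (Eventually.of_forall Subtype.property)⟩
  obtain ⟨⟨m, hm⟩, hmin⟩ := (hφ.comp hval).exists_forall_le
  exact ⟨m, hm, fun x hx => hmin ⟨x, hx⟩⟩

theorem exists_sub_mul_lt_of_frequently_le {D : Set ℕ} {f g : ℕ → ℝ}
    (hg : Tendsto g (atTop ⊓ 𝓟 D) atBot) (hfg : ∃ᶠ n in atTop ⊓ 𝓟 D, f n ≤ g n)
    {a : ℝ} (ha : 0 ≤ a) (b : ℝ) : ∃ x ∈ D, f x - a * x < b := by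
  obtain ⟨x, ⟨hfgx, hgx⟩, hx⟩ := ((hfg.and_eventually (hg.eventually_lt_atBot b)).and_eventually
    (mem_inf_of_right (mem_principal_self D))).exists
  have : 0 ≤ a * x := by positivity
  exact ⟨x, hx, by linarith⟩

theorem Htilde_infinite_of_exists_min_of_unbounded {D : Set ℕ} {f : ℕ → ℝ}
    (hmin : ∀ a : ℝ, a < 0 → ∃ m ∈ D, ∀ x ∈ D, f m - a * m ≤ f x - a * x)
    (hunbdd : ∀ b : ℝ, ∃ x ∈ D, f x < b) :
    (Htilde D f).Infinite := by
  refine Set.infinite_of_not_bddAbove fun ⟨M, hM⟩ => ?_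
  obtain ⟨c, hc⟩ : BddBelow (f '' {n | n ∈ D ∧ n ≤ M}) :=
    (((Set.finite_Iic M).subset fun _ hn => hn.2).image f).bddBelow
  obtain ⟨x, hxD, hx⟩ := hunbdd (c - 1)
  set a : ℝ := -1 / (x + 1)
  have hx1 : (0 : ℝ) < x + 1 := by positivity
  have ha : a < 0 := div_neg_of_neg_of_pos (by norm_num) hx1
  have hax : -1 ≤ a * x := by
    rw [div_mul_eq_mul_div, le_div_iff₀ hx1]
    linarith
  obtain ⟨m, hmD, hm⟩ := hmin a ha
  have hcm : c ≤ f m := hc ⟨m, ⟨hmD, hM ⟨hmD, a, hm⟩⟩, rfl⟩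
  have ham : a * m ≤ 0 := mul_nonpos_of_nonpos_of_nonneg ha.le m.cast_nonneg
  linarith [hm x hxD]

theorem Htilde_infinite_neg_slopes_general (D : Set ℕ) (g₁ g₂ : ℕ → ℝ)
    (hg₂ : Filter.Tendsto g₂ (Filter.atTop ⊓ Filter.principal D) Filter.atBot)
    (hg₁ : Filter.Tendsto (fun n : ℕ => g₁ n / n)
      (Filter.atTop ⊓ Filter.principal D) (nhds 0))
    (f : ℕ → ℝ) (n₀ : ℕ) (hn₀ : n₀ ∈ D)
    (hf : ∀ n ∈ D, n₀ ≤ n → g₁ n ≤ f n)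
    (hinf : {n | n ∈ D ∧ f n ≤ g₂ n}.Infinite) :
    (Htilde D f).Infinite ∧
      (∀ a : ℝ, a < 0 → ∃ m ∈ D, ∀ x ∈ D, f m - a * m ≤ f x - a * x) ∧
      (∀ a : ℝ, 0 ≤ a → ∀ b : ℝ, ∃ x ∈ D, f x - a * x < b) := by
  have hg₁f : g₁ ≤ᶠ[atTop ⊓ 𝓟 D] f :=
    eventually_inf_principal.2 ((eventually_ge_atTop n₀).mono fun n hn hnD => hf n hnD hn)
  have hmin (a : ℝ) (ha : a < 0) : ∃ m ∈ D, ∀ x ∈ D, f m - a * m ≤ f x - a * x :=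
    exists_forall_le_of_tendsto_atTop ⟨n₀, hn₀⟩
      (tendsto_sub_mul_atTop_of_div_tendsto_zero inf_le_left hg₁ hg₁f ha)
  have hfreq : ∃ᶠ n in atTop ⊓ 𝓟 D, f n ≤ g₂ n :=
    frequently_inf_principal.2 (Nat.frequently_atTop_iff_infinite.2 hinf)
  have hlow (a : ℝ) (ha : 0 ≤ a) (b : ℝ) : ∃ x ∈ D, f x - a * x < b :=
    exists_sub_mul_lt_of_frequently_le hg₂ hfreq ha b
  refine ⟨Htilde_infinite_of_exists_min_of_unbounded hmin fun b => ?_, hmin, hlow⟩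
  simpa using hlow 0 le_rfl b

/-- Lemma 3 of the paper: under the stated conditions `H̃_f` is infinite;
for every `a < 0` the function `f(x) − a·x` attains its minimum on `D`, and for `a ≥ 0`
its infimum on `D` is `−∞`. -/
theorem Htilde_infinite_neg_slopes (D : Set ℕ) (g₁ g₂ : ℕ → ℝ)
    (hgg : ∀ n ∈ D, g₁ n ≤ g₂ n)
    (hg₂ : Filter.Tendsto g₂ (Filter.atTop ⊓ Filter.principal D) Filter.atBot)
    (hg₁ : Filter.Tendsto (fun n : ℕ => g₁ n / n)
      (Filter.atTop ⊓ Filter.principal D) (nhds 0))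
    (f : ℕ → ℝ) (n₀ : ℕ) (hn₀ : n₀ ∈ D)
    (hf : ∀ n ∈ D, n₀ ≤ n → g₁ n ≤ f n)
    (hinf : {n | n ∈ D ∧ f n ≤ g₂ n}.Infinite) :
    (Htilde D f).Infinite ∧
      (∀ a : ℝ, a < 0 → ∃ m ∈ D, ∀ x ∈ D, f m - a * m ≤ f x - a * x) ∧
      (∀ a : ℝ, 0 ≤ a → ∀ b : ℝ, ∃ x ∈ D, f x - a * x < b) :=
  Htilde_infinite_neg_slopes_general D g₁ g₂ hg₂ hg₁ f n₀ hn₀ hf hinf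
end
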